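/- Under the same setting: if there is no SI pair associated with x̃, then setting η_i = w̃(x̃_{e_i}), conditions (i) Σ_i k_i η_i ≤ 1 for all k ∈ K and (ii) Σ_i k_i η_i < 1 implies x̃_k < 1, both hold. Consequently, any limit x ∈ X of fluid-scaled states whose local-fluid-scale limits equal x̃ (in the sense that x_k > 0 implies x̃_k = ∞, hence w̃(x̃_k)=1) is an optimal solution of the LP: minimize Σ_k x_k subject to Σ_k k_i x_k = ρ_i, x ≥ 0. -/

import Mathlib

open Finset

section SI

variable {I : Type*} [Fintype I] [DecidableEq I]

/-- `w̃(x̃) = min(1, x̃)` with `w̃(∞) = 1`, as a real number. -/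
noncomputable def wTilde (x : ENNReal) : ℝ := (min 1 x).toReal

/-- The configuration `k - e_i` (truncated subtraction in each coordinate). -/
def esub (k : I → ℕ) (i : I) : I → ℕ := fun j => k j - (if j = i then 1 else 0)

/-- The standard unit vector `e_i`. -/
def unitVec (i : I) : I → ℕ := fun j => if j = i then 1 else 0

/-- `Δ_{(k,i)}(x̃) = w̃(x̃_k) - w̃(x̃_{k - e_i})`. -/
noncomputable def Delta (xt : (I → ℕ) → ENNReal) (k : I → ℕ) (i : I) : ℝ :=
  wTilde (xt k) - wTilde (xt (esub k i))

/-- `(k, i)` is an admissible pair: `k` a nonzero configuration in `K̄` with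
`k_i ≥ 1` and `k - e_i ∈ K̄`. -/
def MemM (Kbar : Set (I → ℕ)) (k : I → ℕ) (i : I) : Prop :=
  k ∈ Kbar ∧ k ≠ 0 ∧ 1 ≤ k i ∧ esub k i ∈ Kbar

/-- `{(k,i),(k',i)}` is a strictly improving (SI) pair associated with `x̃`. -/
def IsSIPair (Kbar : Set (I → ℕ)) (xt : (I → ℕ) → ENNReal)
    (k k' : I → ℕ) (i : I) : Prop :=
  MemM Kbar k i ∧ MemM Kbar k' i ∧
  0 < xt k ∧
  (k' = unitVec i ∨ (0 < k' i ∧ 0 < xt (esub k' i))) ∧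
  Delta xt k' i < Delta xt k i

lemma wTilde_nonneg (z : ENNReal) : 0 ≤ wTilde z := ENNReal.toReal_nonneg

lemma wTilde_le_one (z : ENNReal) : wTilde z ≤ 1 := by
  have h := ENNReal.toReal_mono (by simp : (1 : ENNReal) ≠ ⊤) (min_le_left 1 z)
  simpa [wTilde] using h

lemma wTilde_zero : wTilde (0 : ENNReal) = 0 := by simp [wTilde]

lemma wTilde_pos {z : ENNReal} (hz : 0 < z) : 0 < wTilde z := by
  apply ENNReal.toReal_pos
  · exact (lt_min one_pos hz).ne'
  · exact ne_top_of_le_ne_top (by simp) (min_le_left 1 z)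

lemma lt_one_of_wTilde_lt_one {z : ENNReal} (h : wTilde z < 1) : z < 1 := by
  by_contra hc
  push_neg at hc
  rw [wTilde, min_eq_left hc] at h
  simp at h

lemma pos_of_wTilde_pos {z : ENNReal} (h : 0 < wTilde z) : 0 < z := by
  by_contra hc
  push_neg at hc
  have : z = 0 := le_antisymm hc zero_le
  rw [this, wTilde_zero] at h
  exact lt_irrefl _ h

lemma esub_le (k : I → ℕ) (i j : I) : esub k i j ≤ k j := Nat.sub_le _ _

lemma esub_unitVec (i : I) : esub (unitVec i) i = 0 := by
  funext j; simp [esub, unitVec]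

lemma unitVec_ne_zero (i : I) : unitVec i ≠ (0 : I → ℕ) := by
  intro h
  have := congrFun h i
  simp [unitVec] at this

lemma esub_cast {k : I → ℕ} {i0 : I} (h : 1 ≤ k i0) (j : I) :
    ((esub k i0 j : ℕ) : ℝ) = (k j : ℝ) - (if j = i0 then 1 else 0) := by
  by_cases hj : j = i0
  · subst hj
    have he : esub k j j = k j - 1 := by simp [esub]
    rw [he, Nat.cast_sub h, if_pos rfl, Nat.cast_one]
  · simp [esub, hj]

lemma sum_esub {k : I → ℕ} {i0 : I} (h : 1 ≤ k i0) (c : I → ℝ) :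
    ∑ j, ((esub k i0 j : ℕ) : ℝ) * c j = (∑ j, (k j : ℝ) * c j) - c i0 := by
  have hterm : ∀ j, ((esub k i0 j : ℕ) : ℝ) * c j
      = (k j : ℝ) * c j - (if j = i0 then c j else 0) := by
    intro j
    rw [esub_cast h j]
    by_cases hj : j = i0 <;> simp [hj] <;> ring
  rw [Finset.sum_congr rfl (fun j _ => hterm j), Finset.sum_sub_distrib,
    Finset.sum_ite_eq' Finset.univ i0 c]
  simp

lemma nat_sum_esub_lt {k : I → ℕ} {i0 : I} (h : 1 ≤ k i0) :
    ∑ j, esub k i0 j < ∑ j, k j := by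
  apply Finset.sum_lt_sum (fun j _ => esub_le k i0 j)
  refine ⟨i0, Finset.mem_univ _, ?_⟩
  have he : esub k i0 i0 = k i0 - 1 := by simp [esub]
  omega

/-- Key consequence (A) of no SI pair: `Δ(k,i) ≤ Δ(e_i,i) = η_i` when `x̃_k > 0`. -/
lemma keyA {Kbar : Set (I → ℕ)}
    (hmono : ∀ k ∈ Kbar, ∀ k' : I → ℕ, (∀ j, k' j ≤ k j) → k' ∈ Kbar)
    (h0 : (0 : I → ℕ) ∈ Kbar) (hunit : ∀ i, unitVec i ∈ Kbar)
    {xt : (I → ℕ) → ENNReal} (hx0 : xt 0 = 0)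
    (hnoSI : ∀ k k' : I → ℕ, ∀ i : I, ¬ IsSIPair Kbar xt k k' i)
    {k : I → ℕ} {i : I} (hk : k ∈ Kbar) (hki : 1 ≤ k i) (hxk : 0 < xt k) :
    wTilde (xt k) ≤ wTilde (xt (esub k i)) + wTilde (xt (unitVec i)) := by
  have hne : k ≠ 0 := by
    intro h; rw [h] at hki; simp at hki
  have h := hnoSI k (unitVec i) i
  rw [IsSIPair] at h
  push_neg at h
  have hΔ := h ⟨hk, hne, hki, hmono k hk _ (esub_le k i)⟩
    ⟨hunit i, unitVec_ne_zero i, by simp [unitVec], by rw [esub_unitVec]; exact h0⟩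
    hxk (Or.inl rfl)
  rw [Delta, Delta, esub_unitVec, hx0, wTilde_zero] at hΔ
  linarith

/-- Key consequence (B) of no SI pair: `Δ(k,i) ≥ Δ(e_i,i) = η_i` when
`x̃_{e_i} > 0` and `x̃_{k-e_i} > 0`. -/
lemma keyB {Kbar : Set (I → ℕ)}
    (hmono : ∀ k ∈ Kbar, ∀ k' : I → ℕ, (∀ j, k' j ≤ k j) → k' ∈ Kbar)
    (h0 : (0 : I → ℕ) ∈ Kbar) (hunit : ∀ i, unitVec i ∈ Kbar)
    {xt : (I → ℕ) → ENNReal} (hx0 : xt 0 = 0)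
    (hnoSI : ∀ k k' : I → ℕ, ∀ i : I, ¬ IsSIPair Kbar xt k k' i)
    {k : I → ℕ} {i : I} (hk : k ∈ Kbar) (hki : 1 ≤ k i)
    (hei : 0 < xt (unitVec i)) (hsub : 0 < xt (esub k i)) :
    wTilde (xt (esub k i)) + wTilde (xt (unitVec i)) ≤ wTilde (xt k) := by
  have hne : k ≠ 0 := by
    intro h; rw [h] at hki; simp at hki
  have h := hnoSI (unitVec i) k i
  rw [IsSIPair] at h
  push_neg at h
  have hΔ := h ⟨hunit i, unitVec_ne_zero i, by simp [unitVec], by rw [esub_unitVec]; exact h0⟩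
    ⟨hk, hne, hki, hmono k hk _ (esub_le k i)⟩
    hei (Or.inr ⟨hki, hsub⟩)
  rw [Delta, Delta, esub_unitVec, hx0, wTilde_zero] at hΔ
  linarith

/-- (C1): `w̃(x̃_k) ≤ Σ_i k_i η_i` for all `k ∈ K̄`. -/
lemma claimC1 {Kbar : Set (I → ℕ)}
    (hmono : ∀ k ∈ Kbar, ∀ k' : I → ℕ, (∀ j, k' j ≤ k j) → k' ∈ Kbar)
    (h0 : (0 : I → ℕ) ∈ Kbar) (hunit : ∀ i, unitVec i ∈ Kbar)
    {xt : (I → ℕ) → ENNReal} (hx0 : xt 0 = 0)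
    (hnoSI : ∀ k k' : I → ℕ, ∀ i : I, ¬ IsSIPair Kbar xt k k' i) :
    ∀ k ∈ Kbar, wTilde (xt k) ≤ ∑ i, (k i : ℝ) * wTilde (xt (unitVec i)) := by
  classical
  suffices H : ∀ n : ℕ, ∀ k, k ∈ Kbar → ∑ j, k j ≤ n →
      wTilde (xt k) ≤ ∑ i, (k i : ℝ) * wTilde (xt (unitVec i)) by
    intro k hk; exact H (∑ j, k j) k hk le_rfl
  intro n
  induction n with
  | zero =>
    intro k hk hle
    have hk0 : k = 0 := by
      funext j
      have := Finset.sum_eq_zero_iff.mp (Nat.le_zero.mp hle) j (Finset.mem_univ j)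
      simpa using this
    rw [hk0, hx0, wTilde_zero]
    simp
  | succ n ih =>
    intro k hk hle
    by_cases hk0 : k = 0
    · rw [hk0, hx0, wTilde_zero]
      simp
    · by_cases hxk : xt k = 0
      · rw [hxk, wTilde_zero]
        exact Finset.sum_nonneg fun i _ =>
          mul_nonneg (Nat.cast_nonneg _) (wTilde_nonneg _)
      · obtain ⟨i0, hi0⟩ : ∃ i, k i ≠ 0 := by
          by_contra hc
          push_neg at hc
          exact hk0 (funext fun j => hc j)
        have hki : 1 ≤ k i0 := Nat.one_le_iff_ne_zero.mpr hi0
        have hxkpos : 0 < xt k := pos_iff_ne_zero.mpr hxk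
        have hA := keyA hmono h0 hunit hx0 hnoSI hk hki hxkpos
        have hmem : esub k i0 ∈ Kbar := hmono k hk _ (esub_le k i0)
        have hlt : ∑ j, esub k i0 j < ∑ j, k j := nat_sum_esub_lt hki
        have hIH := ih (esub k i0) hmem (by omega)
        have hsum := sum_esub hki (fun i => wTilde (xt (unitVec i)))
        linarith

/-- (C2): if every type in the support of `k` has `x̃_{e_i} > 0`, then
`Σ_i k_i η_i ≤ w̃(x̃_k)` and `x̃_k > 0`. -/
lemma claimC2 {Kbar : Set (I → ℕ)}
    (hmono : ∀ k ∈ Kbar, ∀ k' : I → ℕ, (∀ j, k' j ≤ k j) → k' ∈ Kbar)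
    (h0 : (0 : I → ℕ) ∈ Kbar) (hunit : ∀ i, unitVec i ∈ Kbar)
    {xt : (I → ℕ) → ENNReal} (hx0 : xt 0 = 0)
    (hnoSI : ∀ k k' : I → ℕ, ∀ i : I, ¬ IsSIPair Kbar xt k k' i) :
    ∀ k, k ∈ Kbar → (∀ i, 0 < k i → 0 < xt (unitVec i)) → k ≠ 0 →
      (∑ i, (k i : ℝ) * wTilde (xt (unitVec i)) ≤ wTilde (xt k)) ∧ 0 < xt k := by
  classical
  suffices H : ∀ n : ℕ, ∀ k, k ∈ Kbar → (∀ i, 0 < k i → 0 < xt (unitVec i)) →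
      k ≠ 0 → ∑ j, k j ≤ n →
      (∑ i, (k i : ℝ) * wTilde (xt (unitVec i)) ≤ wTilde (xt k)) ∧ 0 < xt k by
    intro k hk hsupp hne; exact H (∑ j, k j) k hk hsupp hne le_rfl
  intro n
  induction n with
  | zero =>
    intro k _ _ hne hle
    exfalso
    apply hne
    funext j
    have := Finset.sum_eq_zero_iff.mp (Nat.le_zero.mp hle) j (Finset.mem_univ j)
    simpa using this
  | succ n ih =>
    intro k hk hsupp hne hle
    obtain ⟨i0, hi0⟩ : ∃ i, k i ≠ 0 := by
      by_contra hc
      push_neg at hc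
      exact hne (funext fun j => hc j)
    have hki : 1 ≤ k i0 := Nat.one_le_iff_ne_zero.mpr hi0
    have hei : 0 < xt (unitVec i0) := hsupp i0 hki
    by_cases hsub0 : esub k i0 = 0
    · -- k = unitVec i0
      have hkeq : k = unitVec i0 := by
        funext j
        have hj := congrFun hsub0 j
        simp only [esub] at hj
        by_cases hji : j = i0 <;> simp [unitVec, hji] at hj ⊢ <;> omega
      subst hkeq
      constructor
      · have : ∑ i, ((unitVec i0 i : ℕ) : ℝ) * wTilde (xt (unitVec i))
            = wTilde (xt (unitVec i0)) := by
          rw [show (fun i => ((unitVec i0 i : ℕ) : ℝ) * wTilde (xt (unitVec i)))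
              = fun i => (if i = i0 then wTilde (xt (unitVec i)) else 0) from
            funext fun i => by by_cases hi : i = i0 <;> simp [unitVec, hi]]
          rw [Finset.sum_ite_eq' Finset.univ i0]
          simp
        rw [this]
      · exact hei
    · have hmem : esub k i0 ∈ Kbar := hmono k hk _ (esub_le k i0)
      have hsupp' : ∀ i, 0 < esub k i0 i → 0 < xt (unitVec i) := by
        intro i hi
        exact hsupp i (lt_of_lt_of_le hi (esub_le k i0 i))
      have hlt : ∑ j, esub k i0 j < ∑ j, k j := nat_sum_esub_lt hki
      obtain ⟨hIH, hpos'⟩ := ih (esub k i0) hmem hsupp' hsub0 (by omega)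
      have hB := keyB hmono h0 hunit hx0 hnoSI hk hki hei hpos'
      have hsum := sum_esub hki (fun i => wTilde (xt (unitVec i)))
      have hsumle : ∑ i, (k i : ℝ) * wTilde (xt (unitVec i)) ≤ wTilde (xt k) := by
        linarith
      refine ⟨hsumle, ?_⟩
      have hwpos : 0 < wTilde (xt k) := by
        have := wTilde_pos hei
        have := wTilde_nonneg (xt (esub k i0))
        linarith
      exact pos_of_wTilde_pos hwpos

/-- If `x̃` admits no SI pair, then with `η_i = w̃(x̃_{e_i})`:
(i) `Σ_i k_i η_i ≤ 1` for all `k ∈ K`;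
(ii) `Σ_i k_i η_i < 1` implies `x̃_k < 1`;
and any fluid state `x` compatible with `x̃` (`x_k > 0 → x̃_k = ∞`) satisfying
the conservation constraints is an optimal solution of the LP. -/
theorem stmt9
    (Kbar : Set (I → ℕ)) (hfin : Kbar.Finite)
    (hmono : ∀ k ∈ Kbar, ∀ k' : I → ℕ, (∀ j, k' j ≤ k j) → k' ∈ Kbar)
    (h0 : (0 : I → ℕ) ∈ Kbar) (hunit : ∀ i, unitVec i ∈ Kbar)
    (xt : (I → ℕ) → ENNReal) (hx0 : xt 0 = 0)
    (hnoSI : ∀ k k' : I → ℕ, ∀ i : I, ¬ IsSIPair Kbar xt k k' i)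
    (η : I → ℝ) (hη : ∀ i, η i = wTilde (xt (unitVec i)))
    (ρ : I → ℝ) :
    (∀ k ∈ Kbar, k ≠ (0 : I → ℕ) → ∑ i, (k i : ℝ) * η i ≤ 1) ∧
    (∀ k ∈ Kbar, k ≠ (0 : I → ℕ) → ∑ i, (k i : ℝ) * η i < 1 → xt k < 1) ∧
    (∀ x : (I → ℕ) → ℝ,
      (∀ k, 0 ≤ x k) →
      (∀ k, k ∉ Kbar → x k = 0) → x 0 = 0 →
      (∀ i, ∑ k ∈ hfin.toFinset, (k i : ℝ) * x k = ρ i) →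
      (∀ k, 0 < x k → xt k = ⊤) →
      ∀ y : (I → ℕ) → ℝ,
        (∀ k, 0 ≤ y k) →
        (∀ k, k ∉ Kbar → y k = 0) → y 0 = 0 →
        (∀ i, ∑ k ∈ hfin.toFinset, (k i : ℝ) * y k = ρ i) →
        ∑ k ∈ hfin.toFinset, x k ≤ ∑ k ∈ hfin.toFinset, y k) := by
  classical
  have hEta0 : ∀ i, 0 ≤ η i := fun i => by rw [hη i]; exact wTilde_nonneg _
  -- part (i), without needing `k ≠ 0`
  have parti : ∀ k ∈ Kbar, ∑ i, (k i : ℝ) * η i ≤ 1 := by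
    intro k hk
    set kS : I → ℕ := fun j => if 0 < xt (unitVec j) then k j else 0 with hkS
    have hkSmem : kS ∈ Kbar := hmono k hk kS (fun j => by
      by_cases h : 0 < xt (unitVec j) <;> simp [hkS, h])
    have hsumeq : ∑ i, (k i : ℝ) * η i = ∑ i, (kS i : ℝ) * η i := by
      apply Finset.sum_congr rfl
      intro i _
      by_cases h : 0 < xt (unitVec i)
      · simp [hkS, h]
      · have hz : xt (unitVec i) = 0 := by
          push_neg at h; exact le_antisymm h zero_le
        rw [hη i, hz, wTilde_zero, mul_zero, mul_zero]
    rw [hsumeq]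
    by_cases hkS0 : kS = 0
    · rw [hkS0]; simp
    · have hsupp : ∀ i, 0 < kS i → 0 < xt (unitVec i) := by
        intro i hi
        by_contra hc
        simp [hkS, hc] at hi
      obtain ⟨hle, _⟩ := claimC2 hmono h0 hunit hx0 hnoSI kS hkSmem hsupp hkS0
      calc ∑ i, (kS i : ℝ) * η i
          = ∑ i, (kS i : ℝ) * wTilde (xt (unitVec i)) := by
            apply Finset.sum_congr rfl; intro i _; rw [hη i]
        _ ≤ wTilde (xt kS) := hle
        _ ≤ 1 := wTilde_le_one _
  -- part (ii)
  have partii : ∀ k ∈ Kbar, ∑ i, (k i : ℝ) * η i < 1 → xt k < 1 := by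
    intro k hk hlt
    have h1 := claimC1 hmono h0 hunit hx0 hnoSI k hk
    have heq : ∑ i, (k i : ℝ) * wTilde (xt (unitVec i)) = ∑ i, (k i : ℝ) * η i := by
      apply Finset.sum_congr rfl; intro i _; rw [hη i]
    have : wTilde (xt k) < 1 := by linarith
    exact lt_one_of_wTilde_lt_one this
  refine ⟨fun k hk _ => parti k hk, fun k hk _ => partii k hk, ?_⟩
  intro x hxnn hxK hx00 hxρ hcompat y hynn hyK hy00 hyρ
  have hmemF : ∀ k : I → ℕ, k ∈ hfin.toFinset ↔ k ∈ Kbar := fun k => hfin.mem_toFinset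
  have hxstep : ∀ k ∈ hfin.toFinset, x k = x k * ∑ i, (k i : ℝ) * η i := by
    intro k hkF
    by_cases hxk : x k = 0
    · rw [hxk]; ring
    · have hxkpos : 0 < x k := lt_of_le_of_ne (hxnn k) (Ne.symm hxk)
      have hkK : k ∈ Kbar := (hmemF k).mp hkF
      have htop : xt k = ⊤ := hcompat k hxkpos
      have hle := parti k hkK
      have hge : ¬ (∑ i, (k i : ℝ) * η i < 1) := by
        intro hlt
        have hlt1 := partii k hkK hlt
        rw [htop] at hlt1
        exact not_top_lt hlt1
      have heq1 : ∑ i, (k i : ℝ) * η i = 1 := le_antisymm hle (not_lt.mp hge)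
      rw [heq1]; ring
  have key : ∀ z : (I → ℕ) → ℝ,
      (∀ i, ∑ k ∈ hfin.toFinset, (k i : ℝ) * z k = ρ i) →
      ∑ k ∈ hfin.toFinset, z k * ∑ i, (k i : ℝ) * η i = ∑ i, ρ i * η i := by
    intro z hz
    have hterm : ∀ k : I → ℕ, z k * ∑ i, (k i : ℝ) * η i
        = ∑ i, ((k i : ℝ) * z k) * η i := by
      intro k
      rw [Finset.mul_sum]
      apply Finset.sum_congr rfl
      intro i _
      ring
    rw [Finset.sum_congr rfl (fun k _ => hterm k), Finset.sum_comm]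
    apply Finset.sum_congr rfl
    intro i _
    rw [← Finset.sum_mul, hz i]
  calc ∑ k ∈ hfin.toFinset, x k
      = ∑ k ∈ hfin.toFinset, x k * ∑ i, (k i : ℝ) * η i :=
        Finset.sum_congr rfl hxstep
    _ = ∑ i, ρ i * η i := key x hxρ
    _ = ∑ k ∈ hfin.toFinset, y k * ∑ i, (k i : ℝ) * η i := (key y hyρ).symm
    _ ≤ ∑ k ∈ hfin.toFinset, y k := by
        apply Finset.sum_le_sum
        intro k hkF
        exact mul_le_of_le_one_right (hynn k) (parti k ((hmemF k).mp hkF))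

end SI
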